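/- Let M be a finite matroid with the (t,2t)-property, let C*₁, …, C*_{t−1} be pairwise disjoint cocircuits of M, and let Y = E(M) − ⋃_{i=1}^{t−1} C*_i. Then for every y ∈ Y there is a 2t-element circuit C_y of M containing y such that either (1) |C_y ∩ C*_i| = 2 for all i ∈ {1,…,t−1}, or (2) |C_y ∩ C*_j| = 3 for some j ∈ {1,…,t−1} and |C_y ∩ C*_i| = 2 for all i ∈ {1,…,t−1} − {j}. Moreover, if C_y = S ∪ {y} satisfies (2), then there are at most 3t − 1 elements w ∈ Y such that S ∪ {w} is a circuit of M. -/

import Mathlib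

open Set

/-- A circuit of a matroid: a minimal dependent set. -/
def IsCircuit {α : Type*} (M : Matroid α) (C : Set α) : Prop :=
  M.Dep C ∧ ∀ D, D ⊂ C → ¬ M.Dep D

/-- A cocircuit of a matroid: a circuit of the dual. -/
def IsCocircuit {α : Type*} (M : Matroid α) (C : Set α) : Prop :=
  IsCircuit M✶ C

/-- `M` has the `(t,ℓ)`-property: every `t`-element subset of the ground set is contained
in an `ℓ`-element circuit and an `ℓ`-element cocircuit. -/
def HasTLProperty {α : Type*} (M : Matroid α) (t ℓ : ℕ) : Prop :=
  ∀ X ⊆ M.E, X.ncard = t →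
    (∃ C, IsCircuit M C ∧ C.ncard = ℓ ∧ X ⊆ C) ∧
    (∃ C, IsCocircuit M C ∧ C.ncard = ℓ ∧ X ⊆ C)

/-!
Pick one element in each cocircuit `C i`; together with `y` these are `t` elements, so they lie
in a `2t`-element circuit `Cy`. By orthogonality `Cy` meets every `C i` in at least two elements,
and these intersections avoid `y`, so their sizes add up to at most `2t - 1`: at most one of them
can exceed two, and only by one.

For the bound, let `S = Cy \ {y}` and let `W` be the set of `w ∈ Y` with `S ∪ {w}` a circuit.
Any `t + 1` elements of `W` are dependent, and the `(t,2t)`-property forces circuits to have more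
than `t` elements, so they form a circuit. If `|W| ≥ 3t`, a `2t`-element cocircuit through `t`
elements of `W` misses `t` further elements of `W`; one element inside and `t` outside then form
a circuit meeting the cocircuit in a single element, contradicting orthogonality.
-/

open scoped Function

theorem isCircuit_iff_matroid_isCircuit {α : Type*} {M : Matroid α} {C : Set α} :
    IsCircuit M C ↔ M.IsCircuit C := by
  rw [Matroid.isCircuit_iff_forall_ssubset, IsCircuit]
  exact and_congr_right fun hC ↦ forall₂_congr fun D hD ↦
    Matroid.not_dep_iff (hD.subset.trans hC.subset_ground)

theorem isCocircuit_iff_matroid_isCocircuit {α : Type*} {M : Matroid α} {K : Set α} :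
    IsCocircuit M K ↔ M.IsCocircuit K :=
  isCircuit_iff_matroid_isCircuit

theorem Set.exists_disjoint_of_ncard_lt {α ι : Type*} [Fintype ι] {A : Set α} (hA : A.Finite)
    {K : ι → Set α} (hK : Pairwise (Disjoint on K)) (hcard : A.ncard < Fintype.card ι) :
    ∃ i, Disjoint A (K i) := by
  by_contra! hmeet
  choose g hgA hgK using fun i ↦ not_disjoint_iff.1 (hmeet i)
  have hg : Function.Injective g := fun i j hij ↦
    hK.eq (not_disjoint_iff.2 ⟨g i, hgK i, hij ▸ hgK j⟩)
  have := ncard_le_ncard (range_subset_iff.2 hgA) hA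
  rw [ncard_range_of_injective hg, Nat.card_eq_fintype_card] at this
  omega

theorem eq_two_or_exists_eq_three_of_sum_le {ι : Type*} [Fintype ι] (f : ι → ℕ)
    (h2 : ∀ i, 2 ≤ f i) (hsum : ∑ i, f i ≤ 2 * Fintype.card ι + 1) :
    (∀ i, f i = 2) ∨ ∃ j, f j = 3 ∧ ∀ i, i ≠ j → f i = 2 := by
  classical
  have hexcess : ∑ i, (f i - 2) ≤ 1 := by
    have : ∑ i, (f i - 2) + 2 * Fintype.card ι = ∑ i, f i := by
      rw [mul_comm, ← smul_eq_mul, ← Finset.card_univ, ← Finset.sum_const,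
        ← Finset.sum_add_distrib]
      exact Finset.sum_congr rfl fun i _ ↦ Nat.sub_add_cancel (h2 i)
    omega
  by_cases hall : ∀ i, f i = 2
  · exact .inl hall
  push Not at hall
  obtain ⟨j, hj⟩ := hall
  have hj3 : f j = 3 := by
    have := (Finset.single_le_sum (fun i _ ↦ Nat.zero_le (f i - 2)) (Finset.mem_univ j)).trans
      hexcess
    have := h2 j
    omega
  refine .inr ⟨j, hj3, fun i hij ↦ ?_⟩
  have hpair : (f i - 2) + (f j - 2) ≤ 1 :=
    calc (f i - 2) + (f j - 2) = ∑ k ∈ {i, j}, (f k - 2) :=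
        (Finset.sum_pair (f := fun k ↦ f k - 2) hij).symm
      _ ≤ ∑ k, (f k - 2) := Finset.sum_le_sum_of_subset (Finset.subset_univ _)
      _ ≤ 1 := hexcess
  have := h2 i
  omega

theorem Set.sum_ncard_inter_eq {α ι : Type*} [Fintype ι] {C : Set α} (hC : C.Finite)
    {K : ι → Set α} (hK : Pairwise (Disjoint on K)) :
    ∑ i, (C ∩ K i).ncard = (C ∩ ⋃ i, K i).ncard := by
  rw [inter_iUnion, ncard_iUnion_of_finite (fun _ ↦ hC.inter_of_left _)
    (fun i j hij ↦ (hK hij).mono inter_subset_right inter_subset_right),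
    finsum_eq_sum_of_fintype]

namespace Matroid

variable {α : Type*} {M : Matroid α} {C K S T : Set α} {e : α}

theorem IsCocircuit.notMem_closure_of_disjoint {X : Set α} (hK : M.IsCocircuit K) (heK : e ∈ K)
    (hXK : Disjoint X K) : e ∉ M.closure X := by
  intro he
  obtain ⟨C, hCX, hC, heC⟩ :=
    exists_isCircuit_of_mem_closure he fun heX ↦ hXK.notMem_of_mem_right heK heX
  refine hC.inter_isCocircuit_ne_singleton (e := e) hK (subset_antisymm ?_ (by simp [heC, heK]))
  rintro f ⟨hfC, hfK⟩
  obtain rfl | hfX := hCX hfC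
  · rfl
  · exact absurd hfK (hXK.notMem_of_mem_left hfX)

theorem IsCircuit.two_le_ncard_inter (hC : M.IsCircuit C) (hCfin : C.Finite)
    (hK : M.IsCocircuit K) (hCK : (C ∩ K).Nonempty) : 2 ≤ (C ∩ K).ncard :=
  one_lt_ncard_iff_nontrivial_and_finite.2
    ⟨hC.isCocircuit_inter_nontrivial hK hCK, hCfin.inter_of_left K⟩

/-- If `T ⊆ cl(S)` were independent, a basis of `S ∪ T` through `T` would use only
`|S| - |T|` elements of `S`, too few to meet all the disjoint cocircuits `K i`; a cocircuit
missed by that basis still meets `S`, which the basis spans. -/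
theorem Indep.not_indep_of_subset_closure {ι : Type*} [Fintype ι] (hS : M.Indep S)
    (hSfin : S.Finite) {K : ι → Set α} (hK : ∀ i, M.IsCocircuit (K i))
    (hKdisj : Pairwise (Disjoint on K)) (hSK : ∀ i, (S ∩ K i).Nonempty)
    (hTS : T ⊆ M.closure S) (hTK : ∀ i, Disjoint T (K i))
    (hcard : S.ncard < T.ncard + Fintype.card ι) : ¬ M.Indep T := by
  intro hT
  have hSbasis : M.IsBasis S (S ∪ T) := hS.isBasis_of_subset_of_subset_closure
    subset_union_left (union_subset (M.subset_closure S) hTS)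
  obtain ⟨B, hB, hTB⟩ := hT.subset_isBasis_of_subset subset_union_right
    (union_subset hS.subset_ground hT.subset_ground)
  have hBS : B.encard = S.encard := hB.encard_eq_encard hSbasis
  have hBfin : B.Finite := encard_lt_top_iff.1 (hBS ▸ hSfin.encard_lt_top)
  have hBScard : B.ncard = S.ncard := by rw [ncard_def, hBS, ← ncard_def]
  have hTBcard := ncard_le_ncard hTB hBfin
  obtain ⟨i, hi⟩ := exists_disjoint_of_ncard_lt hBfin.sdiff hKdisj (by
    rw [ncard_sdiff hTB (hBfin.subset hTB)]
    omega)
  have hBK : Disjoint B (K i) := by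
    rw [← sdiff_union_of_subset hTB]
    exact hi.union_left (hTK i)
  obtain ⟨x, hxS, hxK⟩ := hSK i
  exact (hK i).notMem_closure_of_disjoint hxK hBK (hB.subset_closure (.inl hxS))

theorem IsCircuit.ncard_inter_eq_two_or_exists_eq_three {ι : Type*} [Fintype ι] {y : α}
    (hC : M.IsCircuit C) (hCfin : C.Finite) {K : ι → Set α} (hK : ∀ i, M.IsCocircuit (K i))
    (hKdisj : Pairwise (Disjoint on K)) (hCK : ∀ i, (C ∩ K i).Nonempty) (hyC : y ∈ C)
    (hyK : y ∉ ⋃ i, K i) (hCι : C.ncard ≤ 2 * Fintype.card ι + 2) :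
    (∀ i, (C ∩ K i).ncard = 2) ∨ ∃ j, (C ∩ K j).ncard = 3 ∧ ∀ i, i ≠ j → (C ∩ K i).ncard = 2 := by
  refine eq_two_or_exists_eq_three_of_sum_le _
    (fun i ↦ hC.two_le_ncard_inter hCfin (hK i) (hCK i)) ?_
  have hsub : C ∩ ⋃ i, K i ⊆ C \ {y} := fun z hz ↦ ⟨hz.1, fun h ↦ hyK (h ▸ hz.2)⟩
  have := ncard_le_ncard hsub hCfin.sdiff
  rw [ncard_sdiff_singleton_of_mem hyC] at this
  rw [sum_ncard_inter_eq hCfin hKdisj]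
  omega

end Matroid

namespace HasTLProperty

variable {α : Type*} {M : Matroid α} {t ℓ : ℕ} {X W : Set α}

theorem exists_isCircuit (hP : HasTLProperty M t ℓ) (hXE : X ⊆ M.E) (hX : X.ncard = t) :
    ∃ C, M.IsCircuit C ∧ C.ncard = ℓ ∧ X ⊆ C := by
  obtain ⟨⟨C, hC, hCℓ, hXC⟩, -⟩ := hP X hXE hX
  exact ⟨C, isCircuit_iff_matroid_isCircuit.1 hC, hCℓ, hXC⟩

theorem exists_isCocircuit (hP : HasTLProperty M t ℓ) (hXE : X ⊆ M.E) (hX : X.ncard = t) :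
    ∃ K, M.IsCocircuit K ∧ K.ncard = ℓ ∧ X ⊆ K := by
  obtain ⟨-, ⟨K, hK, hKℓ, hXK⟩⟩ := hP X hXE hX
  exact ⟨K, isCocircuit_iff_matroid_isCocircuit.1 hK, hKℓ, hXK⟩

theorem lt_ncard_of_isCircuit {C : Set α} (hP : HasTLProperty M t ℓ) (htℓ : t < ℓ)
    (hE : t ≤ M.E.ncard) (hC : M.IsCircuit C) : t < C.ncard := by
  by_contra! hCt
  obtain ⟨X, hCX, hXE, hX⟩ := exists_subsuperset_card_eq hC.subset_ground hCt hE
  obtain ⟨C', hC', hC'ℓ, hXC'⟩ := hP.exists_isCircuit hXE hX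
  rw [hC.eq_of_subset_isCircuit hC' (hCX.trans hXC')] at hCt
  omega

theorem isCircuit_of_dep (hP : HasTLProperty M t ℓ) (htℓ : t < ℓ) (hE : t ≤ M.E.ncard)
    (hX : M.Dep X) (hXfin : X.Finite) (hXt : X.ncard ≤ t + 1) : M.IsCircuit X := by
  obtain ⟨C, hCX, hC⟩ := hX.exists_isCircuit_subset
  have := hP.lt_ncard_of_isCircuit htℓ hE hC
  rwa [eq_of_subset_of_ncard_le hCX (by omega) hXfin] at hC

theorem ncard_lt_of_forall_isCircuit (hP : HasTLProperty M t ℓ) (ht : 0 < t)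
    (hfin : M.E.Finite) (hWE : W ⊆ M.E)
    (hW : ∀ T ⊆ W, T.ncard = t + 1 → M.IsCircuit T) : W.ncard < ℓ + t := by
  by_contra! hWt
  obtain ⟨X, hXW, hX⟩ := exists_subset_card_eq (show t ≤ W.ncard by omega)
  obtain ⟨D, hD, hDℓ, hXD⟩ := hP.exists_isCocircuit (hXW.trans hWE) hX
  obtain ⟨w, hwX⟩ := nonempty_of_ncard_ne_zero (hX ▸ ht.ne')
  obtain ⟨T, hTW, hT⟩ := exists_subset_card_eq (show t ≤ (W \ D).ncard by
    have := le_ncard_sdiff D W (hfin.subset hD.subset_ground)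
    omega)
  have hwT : w ∉ T := fun h ↦ (hTW h).2 (hXD hwX)
  have hTfin : T.Finite := hfin.subset (hTW.trans (sdiff_subset.trans hWE))
  have hcirc := hW (insert w T) (insert_subset (hXW hwX) (hTW.trans sdiff_subset))
    (by rw [ncard_insert_of_notMem hwT hTfin, hT])
  refine hcirc.inter_isCocircuit_ne_singleton (e := w) hD ?_
  rw [insert_inter_of_mem (hXD hwX), (disjoint_sdiff_left.mono_left hTW).inter_eq,
    insert_empty_eq]

theorem exists_isCircuit_meets_all {ι : Type*} [Fintype ι] {y : α} (hP : HasTLProperty M t ℓ)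
    {K : ι → Set α} (hK : ∀ i, M.IsCocircuit (K i)) (hKdisj : Pairwise (Disjoint on K))
    (hι : Fintype.card ι + 1 = t) (hy : y ∈ M.E \ ⋃ i, K i) :
    ∃ C, M.IsCircuit C ∧ C.ncard = ℓ ∧ y ∈ C ∧ ∀ i, (C ∩ K i).Nonempty := by
  choose x hx using fun i ↦ (hK i).nonempty
  have hxinj : Function.Injective x := fun i j hij ↦
    hKdisj.eq (not_disjoint_iff.2 ⟨x i, hx i, hij ▸ hx j⟩)
  have hyx : y ∉ range x := by
    rintro ⟨i, rfl⟩
    exact hy.2 (mem_iUnion_of_mem i (hx i))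
  obtain ⟨C, hC, hCℓ, hyxC⟩ := hP.exists_isCircuit (X := insert y (range x))
    (insert_subset hy.1 (range_subset_iff.2 fun i ↦ (hK i).subset_ground (hx i)))
    (by rw [ncard_insert_of_notMem hyx, ncard_range_of_injective hxinj,
      Nat.card_eq_fintype_card, hι])
  exact ⟨C, hC, hCℓ, hyxC (mem_insert y _),
    fun i ↦ ⟨x i, hyxC (mem_insert_of_mem y (mem_range_self i)), hx i⟩⟩

theorem ncard_setOf_isCircuit_insert_lt {ι : Type*} [Fintype ι] {S : Set α}
    (hP : HasTLProperty M t (2 * t)) (ht : 0 < t) (hfin : M.E.Finite) (hE : t ≤ M.E.ncard)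
    {K : ι → Set α} (hK : ∀ i, M.IsCocircuit (K i)) (hKdisj : Pairwise (Disjoint on K))
    (hS : M.Indep S) (hSK : ∀ i, (S ∩ K i).Nonempty) (hSι : S.ncard ≤ t + Fintype.card ι) :
    {w ∈ M.E \ ⋃ i, K i | M.IsCircuit (insert w S)}.ncard < 3 * t := by
  set W := {w ∈ M.E \ ⋃ i, K i | M.IsCircuit (insert w S)}
  have hWE : W ⊆ M.E := fun w hw ↦ hw.1.1
  have hWcl : W ⊆ M.closure S := fun w hw ↦ hS.mem_closure_iff.2 (.inl hw.2.dep)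
  have hWK i : Disjoint W (K i) :=
    disjoint_left.2 fun w hw hwK ↦ hw.1.2 (mem_iUnion_of_mem i hwK)
  have hWcirc : ∀ T ⊆ W, T.ncard = t + 1 → M.IsCircuit T := fun T hTW hT ↦
    hP.isCircuit_of_dep (by omega) hE
      ((Matroid.not_indep_iff (hTW.trans hWE)).1 <|
        hS.not_indep_of_subset_closure (hfin.subset hS.subset_ground) hK hKdisj hSK
          (hTW.trans hWcl) (fun i ↦ (hWK i).mono_left hTW) (by omega))
      (hfin.subset (hTW.trans hWE)) hT.le
  have := hP.ncard_lt_of_forall_isCircuit ht hfin hWE hWcirc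
  omega

end HasTLProperty

theorem statement10 {α : Type*} (M : Matroid α) (hfin : M.E.Finite) (t : ℕ) (ht : 0 < t)
    (hprop : HasTLProperty M t (2 * t))
    (C : Fin (t - 1) → Set α) (hC : ∀ i, IsCocircuit M (C i))
    (hdisj : ∀ i j, i ≠ j → Disjoint (C i) (C j)) :
    ∀ y ∈ M.E \ ⋃ i, C i,
      ∃ Cy, IsCircuit M Cy ∧ Cy.ncard = 2 * t ∧ y ∈ Cy ∧
        ((∀ i, (Cy ∩ C i).ncard = 2) ∨
          (∃ j, (Cy ∩ C j).ncard = 3 ∧ ∀ i, i ≠ j → (Cy ∩ C i).ncard = 2)) ∧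
        ((∃ j, (Cy ∩ C j).ncard = 3 ∧ ∀ i, i ≠ j → (Cy ∩ C i).ncard = 2) →
          {w ∈ M.E \ ⋃ i, C i | IsCircuit M (insert w (Cy \ {y}))}.ncard ≤ 3 * t - 1) := by
  intro y hy
  simp_rw [isCircuit_iff_matroid_isCircuit]
  replace hC i : M.IsCocircuit (C i) := isCocircuit_iff_matroid_isCocircuit.1 (hC i)
  have hCdisj : Pairwise (Disjoint on C) := hdisj
  have hι : Fintype.card (Fin (t - 1)) + 1 = t := by rw [Fintype.card_fin]; omega
  obtain ⟨Cy, hCy, hCyt, hyCy, hCyC⟩ := hprop.exists_isCircuit_meets_all hC hCdisj hι hy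
  have hCyfin : Cy.Finite := hfin.subset hCy.subset_ground
  have hSC i : ((Cy \ {y}) ∩ C i).Nonempty :=
    let ⟨x, hxCy, hxC⟩ := hCyC i
    ⟨x, ⟨hxCy, fun h ↦ hy.2 (mem_iUnion_of_mem i (h ▸ hxC))⟩, hxC⟩
  refine ⟨Cy, hCy, hCyt, hyCy, hCy.ncard_inter_eq_two_or_exists_eq_three hCyfin hC hCdisj
    hCyC hyCy hy.2 (by omega), fun _ ↦ ?_⟩
  have hE : t ≤ M.E.ncard := by
    have := ncard_le_ncard hCy.subset_ground hfin
    omega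
  have := hprop.ncard_setOf_isCircuit_insert_lt ht hfin hE hC hCdisj
    (hCy.sdiff_singleton_indep hyCy) hSC
    (by rw [ncard_sdiff_singleton_of_mem hyCy]; omega)
  omega
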